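/- arXiv:1511.01955 — 7 statements merged into one kernel-verified Lean document; each statement's English description precedes it below -/
import Mathlib

section
/- Let R_r = F_{p^k}[v]/(v^{r+1} - v) with p prime, r > 1, gcd(r,p)=1. Define e_1 = (1/r)(v + v^2 + ... + v^r), e_2 = -(1/r)(v + v^2 + ... + v^{r-1}) + ((r-1)/r)v^r, and e_3 = 1 - v^r. Then e_1, e_2, e_3 are pairwise orthogonal idempotents (e_i e_j = 0 for i ≠ j, e_i^2 = e_i) with e_1 + e_2 + e_3 = 1. -/
/-!
Because `v ^ (r + 1) = v`, multiplication by `v` permutes `v, v ^ 2, …, v ^ r` cyclically, so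
`s = v + ⋯ + v ^ r` satisfies `v * s = s`. Hence `s * s = r * s`, and `e₁ = s / r` is an idempotent
with `e₁ * v ^ r = e₁`. Since `v ^ r` is idempotent as well, and `e₂ = v ^ r - e₁`, `e₃ = 1 - v ^ r`,
the three elements are the decomposition of `1` attached to the nested idempotents `e₁ ≤ v ^ r`.
-/

open Polynomial Finset

section IdempotentTriple

variable {A : Type*} [CommRing A]

theorem IsIdempotentElem.orthogonal_triple_of_mul_eq {e f : A} (he : IsIdempotentElem e)
    (hf : IsIdempotentElem f) (hef : e * f = e) :
    (e * e = e ∧ (f - e) * (f - e) = f - e ∧ (1 - f) * (1 - f) = 1 - f) ∧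
    (e * (f - e) = 0 ∧ e * (1 - f) = 0 ∧ (f - e) * (1 - f) = 0) ∧
    e + (f - e) + (1 - f) = 1 := by
  rw [IsIdempotentElem] at he hf
  refine ⟨⟨he, ?_, ?_⟩, ⟨?_, ?_, ?_⟩, ?_⟩
  · linear_combination hf - 2 * hef + he
  · linear_combination hf
  · linear_combination hef - he
  · linear_combination -hef
  · linear_combination -hf + hef
  · ring

end IdempotentTriple

section PowSucc

variable {A : Type*} [CommRing A] {v : A} {r : ℕ}

theorem mul_sum_Icc_pow_of_pow_succ_eq (hv : v ^ (r + 1) = v) :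
    v * ∑ i ∈ Icc 1 r, v ^ i = ∑ i ∈ Icc 1 r, v ^ i := by
  have hshift : ∑ i ∈ Icc 1 r, v ^ i = ∑ i ∈ range r, v ^ (i + 1) := by
    rw [← Ico_add_one_right_eq_Icc, sum_Ico_eq_sum_range]
    simp only [Nat.add_sub_cancel, add_comm 1]
  have hrot := sum_range_succ' (fun i => v ^ (i + 1)) r
  rw [sum_range_succ, zero_add, pow_one, hv] at hrot
  rw [hshift, mul_sum]
  simp only [← pow_succ']
  exact add_right_cancel hrot.symm

theorem pow_mul_sum_Icc_pow_of_pow_succ_eq (hv : v ^ (r + 1) = v) (n : ℕ) :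
    v ^ n * ∑ i ∈ Icc 1 r, v ^ i = ∑ i ∈ Icc 1 r, v ^ i := by
  induction n with
  | zero => rw [pow_zero, one_mul]
  | succ n ih => rw [pow_succ, mul_assoc, mul_sum_Icc_pow_of_pow_succ_eq hv, ih]

theorem sum_Icc_pow_mul_self_of_pow_succ_eq (hv : v ^ (r + 1) = v) :
    (∑ i ∈ Icc 1 r, v ^ i) * ∑ i ∈ Icc 1 r, v ^ i = r * ∑ i ∈ Icc 1 r, v ^ i := by
  rw [sum_mul, sum_congr rfl fun i _ => pow_mul_sum_Icc_pow_of_pow_succ_eq hv i, sum_const,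
    Nat.card_Icc, Nat.add_sub_cancel, nsmul_eq_mul]

theorem isIdempotentElem_pow_of_pow_succ_eq (hv : v ^ (r + 1) = v) (hr : 1 ≤ r) :
    IsIdempotentElem (v ^ r) := by
  obtain ⟨m, rfl⟩ := Nat.exists_eq_add_of_le' hr
  calc v ^ (m + 1) * v ^ (m + 1) = v ^ m * v ^ (m + 1 + 1) := by ring
    _ = v ^ (m + 1) := by rw [hv, pow_succ]

theorem isIdempotentElem_mul_sum_Icc_pow (hv : v ^ (r + 1) = v) {c : A} (hc : c * r = 1) :
    IsIdempotentElem (c * ∑ i ∈ Icc 1 r, v ^ i) ∧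
      (c * ∑ i ∈ Icc 1 r, v ^ i) * v ^ r = c * ∑ i ∈ Icc 1 r, v ^ i := by
  refine ⟨?_, ?_⟩
  · rw [IsIdempotentElem]
    linear_combination c * c * sum_Icc_pow_mul_self_of_pow_succ_eq hv
      + c * (∑ i ∈ Icc 1 r, v ^ i) * hc
  · linear_combination c * pow_mul_sum_Icc_pow_of_pow_succ_eq hv r

end PowSucc

theorem stmt2_general (p k r : ℕ) [Fact p.Prime] (hr : 1 < r)
    (hgcd : Nat.gcd r p = 1) :
    let F := GaloisField p k
    let Rr := AdjoinRoot ((X : F[X]) ^ (r + 1) - X)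
    let v : Rr := AdjoinRoot.root ((X : F[X]) ^ (r + 1) - X)
    let e1 : Rr := algebraMap F Rr ((r : F)⁻¹) * ∑ i ∈ Finset.Icc 1 r, v ^ i
    let e2 : Rr := -(algebraMap F Rr ((r : F)⁻¹) * ∑ i ∈ Finset.Icc 1 (r - 1), v ^ i)
      + algebraMap F Rr (((r : F) - 1) * (r : F)⁻¹) * v ^ r
    let e3 : Rr := 1 - v ^ r
    (e1 * e1 = e1 ∧ e2 * e2 = e2 ∧ e3 * e3 = e3) ∧
    (e1 * e2 = 0 ∧ e1 * e3 = 0 ∧ e2 * e3 = 0) ∧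
    e1 + e2 + e3 = 1 := by
  intro F Rr v e1 e2 e3
  have hv : v ^ (r + 1) = v := by
    have hroot := AdjoinRoot.eval₂_root ((X : F[X]) ^ (r + 1) - X)
    rwa [eval₂_sub, eval₂_X_pow, eval₂_X, sub_eq_zero] at hroot
  have hrF : (r : F) ≠ 0 := by
    rw [Ne, CharP.cast_eq_zero_iff F p]
    exact fun hpr => (Fact.out : p.Prime).one_lt.ne'
      (Nat.Coprime.eq_one_of_dvd (Nat.coprime_comm.mp hgcd) hpr)
  set c := algebraMap F Rr (r : F)⁻¹
  have hc : c * r = 1 := by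
    rw [← map_natCast (algebraMap F Rr), ← map_mul, inv_mul_cancel₀ hrF, map_one]
  obtain ⟨he, hef⟩ := isIdempotentElem_mul_sum_Icc_pow hv hc
  have he2 : e2 = v ^ r - e1 := by
    obtain ⟨m, rfl⟩ := Nat.exists_eq_add_of_le' hr.le
    have hsplit := sum_Icc_succ_top (show 1 ≤ m + 1 by omega) (fun i => v ^ i)
    simp only [e2, e1, Nat.add_sub_cancel, map_mul, map_sub, map_one] at hsplit ⊢
    rw [map_natCast]
    linear_combination c * hsplit + v ^ (m + 1) * hc
  rw [he2]
  exact he.orthogonal_triple_of_mul_eq (isIdempotentElem_pow_of_pow_succ_eq hv hr.le) hef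

/-- In `R_r = F_{p^k}[v]/(v^{r+1} - v)` with `p` prime, `r > 1`,
`gcd(r,p)=1`, the elements `e_1 = (1/r)(v + ... + v^r)`,
`e_2 = -(1/r)(v + ... + v^{r-1}) + ((r-1)/r) v^r`, and `e_3 = 1 - v^r`
are pairwise orthogonal idempotents summing to `1`. -/
theorem stmt2 (p k r : ℕ) [Fact p.Prime] (hk : 0 < k) (hr : 1 < r)
    (hgcd : Nat.gcd r p = 1) :
    let F := GaloisField p k
    let Rr := AdjoinRoot ((X : F[X]) ^ (r + 1) - X)
    let v : Rr := AdjoinRoot.root ((X : F[X]) ^ (r + 1) - X)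
    let e1 : Rr := algebraMap F Rr ((r : F)⁻¹) * ∑ i ∈ Finset.Icc 1 r, v ^ i
    let e2 : Rr := -(algebraMap F Rr ((r : F)⁻¹) * ∑ i ∈ Finset.Icc 1 (r - 1), v ^ i)
      + algebraMap F Rr (((r : F) - 1) * (r : F)⁻¹) * v ^ r
    let e3 : Rr := 1 - v ^ r
    (e1 * e1 = e1 ∧ e2 * e2 = e2 ∧ e3 * e3 = e3) ∧
    (e1 * e2 = 0 ∧ e1 * e3 = 0 ∧ e2 * e3 = 0) ∧
    e1 + e2 + e3 = 1 :=
  stmt2_general p k r hr hgcd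
end

section
/- For cyclic codes C_1, ..., C_t of length n over a field F with gcd(n, char F)=1, dim(C_1 + ... + C_t) = Σ dim(C_i) - Σ_{i<j} dim(C_i ∩ C_j) + Σ_{i<j<k} dim(C_i ∩ C_j ∩ C_k) - ... + (-1)^{t-1} dim(C_1 ∩ ... ∩ C_t). -/
/-!
Ideals of `F[X] ⧸ (X ^ n - 1)` form a distributive lattice. Indeed, the ideals of a principal
ideal domain are order-anti-isomorphic to its associates, where `⊔` and `⊓` act on the multisets
of prime factors, and the correspondence theorem identifies the ideals of a quotient with an
interval of ideals upstairs. On a bounded distributive lattice, any modular function `d` with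
`d ⊥ = 0` satisfies inclusion–exclusion; dimension is such a function. The inclusion–exclusion
identity follows by induction on the number of terms, once all terms are first met with an
arbitrary element `b`, so that the induction step only needs distributivity and modularity.
-/

open Polynomial

namespace Associates

variable {α : Type*} [CommMonoidWithZero α] [UniqueFactorizationMonoid α] [Nontrivial α]

open scoped Classical in
theorem factors_sup (a b : Associates α) : (a ⊔ b).factors = a.factors ⊔ b.factors :=
  prod_factors _

open scoped Classical in
theorem factors_inf (a b : Associates α) : (a ⊓ b).factors = a.factors ⊓ b.factors :=
  prod_factors _

noncomputable instance : DistribLattice (Associates α) :=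
  .ofInfSupLe fun a b c => le_of_eq <| eq_of_factors_eq_factors <| by
    classical simp only [factors_sup, factors_inf, inf_sup_left]

end Associates

section PrincipalIdealRing

variable {R : Type*} [CommRing R] [IsDomain R] [IsPrincipalIdealRing R]

noncomputable def Associates.orderIsoIdeal : (Associates R)ᵒᵈ ≃o Ideal R where
  toEquiv := (OrderDual.ofDual.trans (Ideal.associatesEquivIsPrincipal R)).trans
    (Equiv.subtypeUnivEquiv IsPrincipalIdealRing.principal)
  map_rel_iff' {a b} := by
    obtain ⟨a, rfl⟩ := Associates.mk_surjective (OrderDual.ofDual a)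
    obtain ⟨b, rfl⟩ := Associates.mk_surjective (OrderDual.ofDual b)
    exact Ideal.span_singleton_le_span_singleton.trans Associates.mk_le_mk_iff_dvd.symm

theorem Ideal.inf_sup_left_of_isPrincipalIdealRing (I J K : Ideal R) :
    I ⊓ (J ⊔ K) = I ⊓ J ⊔ I ⊓ K := by
  let e : (Associates R)ᵒᵈ ≃o Ideal R := Associates.orderIsoIdeal
  obtain ⟨a, rfl⟩ := e.surjective I
  obtain ⟨b, rfl⟩ := e.surjective J
  obtain ⟨c, rfl⟩ := e.surjective K
  simp only [← e.map_sup, ← e.map_inf, inf_sup_left]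

end PrincipalIdealRing

theorem Ideal.inf_sup_left_of_surjective {R S : Type*} [CommRing R] [CommRing S] {f : R →+* S}
    (hf : Function.Surjective f) (h : ∀ I J K : Ideal R, I ⊓ (J ⊔ K) = I ⊓ J ⊔ I ⊓ K)
    (I J K : Ideal S) : I ⊓ (J ⊔ K) = I ⊓ J ⊔ I ⊓ K := by
  let _ : DistribLattice (Ideal R) := .ofInfSupLe fun I J K => (h I J K).le
  let e : Ideal S ≃o Set.Ici (Ideal.comap f ⊥) := Ideal.relIsoOfSurjective f hf
  exact e.injective <| by simp only [e.map_inf, e.map_sup, inf_sup_left]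

noncomputable instance AdjoinRoot.instDistribLatticeIdeal {K : Type*} [Field K] (f : K[X]) :
    DistribLattice (Ideal (AdjoinRoot f)) :=
  .ofInfSupLe fun I J L => (Ideal.inf_sup_left_of_surjective AdjoinRoot.mk_surjective
    Ideal.inf_sup_left_of_isPrincipalIdealRing I J L).le

section InclusionExclusion

variable {α ι : Type*} [DistribLattice α] [BoundedOrder α] [DecidableEq ι] {d : α → ℤ}

theorem sum_powerset_neg_one_pow_mul_inf_eq_sub (hbot : d ⊥ = 0)
    (hmod : ∀ a b, d (a ⊔ b) + d (a ⊓ b) = d a + d b) (C : ι → α) (s : Finset ι) (b : α) :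
    ∑ S ∈ s.powerset, (-1) ^ S.card * d (b ⊓ S.inf C) = d b - d (b ⊓ s.sup C) := by
  induction s using Finset.induction_on generalizing b with
  | empty => simp [hbot]
  | @insert a s ha ih =>
    have hinsert : ∑ S ∈ s.powerset, (-1) ^ (insert a S).card * d (b ⊓ (insert a S).inf C) =
        -∑ S ∈ s.powerset, (-1) ^ S.card * d (b ⊓ C a ⊓ S.inf C) := by
      rw [← Finset.sum_neg_distrib]
      refine Finset.sum_congr rfl fun S hS => ?_
      rw [Finset.card_insert_of_notMem fun h => ha (Finset.mem_powerset.mp hS h),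
        Finset.inf_insert, inf_assoc, pow_succ]
      ring
    have hsplit := hmod (b ⊓ C a) (b ⊓ s.sup C)
    rw [← inf_sup_left, inf_inf_inf_comm, inf_idem, ← inf_assoc] at hsplit
    rw [Finset.sum_powerset_insert ha, hinsert, ih, ih, Finset.sup_insert]
    linarith

theorem inclusion_exclusion_sup_of_modular (hbot : d ⊥ = 0)
    (hmod : ∀ a b, d (a ⊔ b) + d (a ⊓ b) = d a + d b) (C : ι → α) (s : Finset ι) :
    d (s.sup C) = ∑ S ∈ s.powerset.filter Finset.Nonempty, (-1) ^ (S.card + 1) * d (S.inf C) := by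
  have h := sum_powerset_neg_one_pow_mul_inf_eq_sub hbot hmod C s ⊤
  have hempty : s.powerset.filter (fun S => ¬S.Nonempty) = {∅} := by
    ext S; simp +contextual [Finset.not_nonempty_iff_eq_empty]
  rw [← Finset.sum_filter_add_sum_filter_not _ Finset.Nonempty, hempty, Finset.sum_singleton] at h
  simp only [top_inf_eq, Finset.card_empty, pow_zero, Finset.inf_empty, one_mul] at h
  simp only [pow_succ, mul_neg_one, neg_mul, Finset.sum_neg_distrib]
  linarith

end InclusionExclusion

theorem stmt14_general {F : Type*} [Field F] (n t : ℕ) (hn : 0 < n)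
    (C : Fin t → Ideal (AdjoinRoot ((X : F[X]) ^ n - 1))) :
    (Module.finrank F (Submodule.restrictScalars F (⨆ i, C i)) : ℤ) =
      ∑ S ∈ Finset.univ.powerset.filter Finset.Nonempty,
        (-1 : ℤ) ^ (S.card + 1) *
          (Module.finrank F (Submodule.restrictScalars F (⨅ i ∈ S, C i)) : ℤ) := by
  have hmonic : ((X : F[X]) ^ n - 1).Monic := by simpa using monic_X_pow_sub_C (1 : F) hn.ne'
  have := hmonic.finite_adjoinRoot
  have h := inclusion_exclusion_sup_of_modular
    (d := fun I : Ideal (AdjoinRoot ((X : F[X]) ^ n - 1)) =>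
      (Module.finrank F (I.restrictScalars F) : ℤ))
    (by exact_mod_cast finrank_bot F _)
    (fun I J => by
      have := Submodule.finrank_sup_add_finrank_inf_eq (I.restrictScalars F) (J.restrictScalars F)
      rw [← Submodule.restrictScalars_sup, ← Submodule.restrictScalars_inf] at this
      exact_mod_cast this)
    C Finset.univ
  rw [Finset.sup_univ_eq_iSup] at h
  refine h.trans (Finset.sum_congr rfl fun S _ => ?_)
  rw [Finset.inf_eq_iInf]

/-- For cyclic codes `C 1, ..., C t` of length `n` over a field `F` with
`gcd(n, char F) = 1`, viewed as `F`-subspaces,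
`dim(C 1 + ... + C t) = Σ_{∅ ≠ S ⊆ {1..t}} (-1)^{|S|+1} dim(⋂_{i ∈ S} C i)`. -/
theorem stmt14 {F : Type*} [Field F] (n t : ℕ) (hn : 0 < n)
    (hchar : Nat.Coprime n (ringChar F))
    (C : Fin t → Ideal (AdjoinRoot ((X : F[X]) ^ n - 1))) :
    (Module.finrank F (Submodule.restrictScalars F (⨆ i, C i)) : ℤ) =
      ∑ S ∈ Finset.univ.powerset.filter Finset.Nonempty,
        (-1 : ℤ) ^ (S.card + 1) *
          (Module.finrank F (Submodule.restrictScalars F (⨅ i ∈ S, C i)) : ℤ) :=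
  stmt14_general n t hn C
end

section
/- Let C = e_1 C_1 ⊕ e_2 C_2 ⊕ e_3 C_3 be a linear code of length n over R = e_1 F ⊕ e_2 F ⊕ e_3 F. Then C is invariant under the cyclic shift σ on R^n if and only if each C_i is invariant under the cyclic shift on F^n; i.e., C is cyclic over R iff C_1, C_2, C_3 are cyclic over F. -/
/-- A linear code `C = e1 C1 ⊕ e2 C2 ⊕ e3 C3` of length `n` over
`R = e1 F ⊕ e2 F ⊕ e3 F` (realized as `F × F × F`) is invariant under the cyclic
shift `σ` on `R^n` iff each component code `C1, C2, C3` is invariant under the cyclic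
shift on `F^n`; i.e. `C` is cyclic over `R` iff `C1, C2, C3` are cyclic over `F`. -/
theorem stmt15 (p k n : ℕ) [Fact p.Prime] (hk : 0 < k) [NeZero n]
    (C : Submodule (GaloisField p k × GaloisField p k × GaloisField p k)
      (Fin n → GaloisField p k × GaloisField p k × GaloisField p k)) :
    let F := GaloisField p k
    let C1 : Set (Fin n → F) := {s | ∃ t u : Fin n → F, (fun i => (s i, t i, u i)) ∈ C}
    let C2 : Set (Fin n → F) := {t | ∃ s u : Fin n → F, (fun i => (s i, t i, u i)) ∈ C}
    let C3 : Set (Fin n → F) := {u | ∃ s t : Fin n → F, (fun i => (s i, t i, u i)) ∈ C}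
    ((∀ x ∈ C, (fun i => x (i - 1)) ∈ C) ↔
      ((∀ s ∈ C1, (fun i => s (i - 1)) ∈ C1) ∧
       (∀ t ∈ C2, (fun i => t (i - 1)) ∈ C2) ∧
       (∀ u ∈ C3, (fun i => u (i - 1)) ∈ C3))) := by
  intro F C1 C2 C3
  have key : ∀ (r : F × F × F) (x : Fin n → F × F × F), x ∈ C →
      (fun i => r * x i) ∈ C := by
    intro r x hx
    simpa [Pi.smul_def, smul_eq_mul] using C.smul_mem r hx
  have hC1 : ∀ s : Fin n → F, s ∈ C1 ↔ (fun i => ((s i : F), (0:F), (0:F))) ∈ C := by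
    intro s
    constructor
    · rintro ⟨t, u, h⟩
      simpa [Prod.mk_mul_mk] using key (1,0,0) _ h
    · intro h
      exact ⟨0, 0, by simpa using h⟩
  have hC2 : ∀ t : Fin n → F, t ∈ C2 ↔ (fun i => ((0:F), (t i : F), (0:F))) ∈ C := by
    intro t
    constructor
    · rintro ⟨s, u, h⟩
      simpa [Prod.mk_mul_mk] using key (0,1,0) _ h
    · intro h
      exact ⟨0, 0, by simpa using h⟩
  have hC3 : ∀ u : Fin n → F, u ∈ C3 ↔ (fun i => ((0:F), (0:F), (u i : F))) ∈ C := by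
    intro u
    constructor
    · rintro ⟨s, t, h⟩
      simpa [Prod.mk_mul_mk] using key (0,0,1) _ h
    · intro h
      exact ⟨0, 0, by simpa using h⟩
  constructor
  · intro hC
    refine ⟨?_, ?_, ?_⟩
    · rintro s ⟨t, u, hx⟩
      exact ⟨fun i => t (i - 1), fun i => u (i - 1), hC _ hx⟩
    · rintro t ⟨s, u, hx⟩
      exact ⟨fun i => s (i - 1), fun i => u (i - 1), hC _ hx⟩
    · rintro u ⟨s, t, hx⟩
      exact ⟨fun i => s (i - 1), fun i => t (i - 1), hC _ hx⟩
  · rintro ⟨h1, h2, h3⟩ x hx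
    set s : Fin n → F := fun i => (x i).1 with hs
    set t : Fin n → F := fun i => (x i).2.1 with ht
    set u : Fin n → F := fun i => (x i).2.2 with hu
    have hx' : (fun i => (s i, t i, u i)) ∈ C := hx
    have m1 : (fun i => ((s (i-1) : F), (0:F), (0:F))) ∈ C :=
      (hC1 _).mp (h1 s ⟨t, u, hx'⟩)
    have m2 : (fun i => ((0:F), (t (i-1) : F), (0:F))) ∈ C :=
      (hC2 _).mp (h2 t ⟨s, u, hx'⟩)
    have m3 : (fun i => ((0:F), (0:F), (u (i-1) : F))) ∈ C :=
      (hC3 _).mp (h3 u ⟨s, t, hx'⟩)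
    have hsum := C.add_mem (C.add_mem m1 m2) m3
    have heq : (fun i => x (i - 1)) =
        ((fun i => ((s (i-1) : F), (0:F), (0:F))) + fun i => ((0:F), (t (i-1) : F), (0:F)))
          + fun i => ((0:F), (0:F), (u (i-1) : F)) := by
      funext i
      simp [Pi.add_apply, Prod.ext_iff, hs, ht, hu]
    rw [heq]
    exact hsum
end

section
/- If C = e_1 C_1 ⊕ e_2 C_2 ⊕ e_3 C_3 is a cyclic code of length n over R, where C_i has generator polynomial g_i(x) over F = F_{p^k}, then C = <e_1 g_1(x), e_2 g_2(x), e_3 g_3(x)> as an ideal of R[x]/(x^n - 1), and |C| = (p^k)^{3n - deg g_1 - deg g_2 - deg g_3}. -/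
/-! The idempotent decomposition splits `R[x]/(x^n - 1)` coordinatewise: the projections
`R → F` induce ring maps `π_j : R[x]/(x^n - 1) → F[x]/(x^n - 1)` with
`π_j (e_i • z) = δ_ij z` for `z` coming from `F[x]/(x^n - 1)`, so `(y_i) ↦ ∑ e_i • y_i`
is injective and maps `∏ ⟨g_i⟩` onto `C`. A principal ideal `⟨g⟩` with `g h = x^n - 1` is
in bijection with the polynomials of degree `< deg h = n - deg g` via `b ↦ g b` (onto, by
reducing `b` modulo `h`), so `|⟨g⟩| = |F|^(n - deg g)`. The generators come from
`e_i • g_i a_i = (e_i • g_i) a_i`. -/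

open Polynomial

theorem Ideal.eq_span_range_of_mem_iff_exists_sum {A S ι : Type*} [CommSemiring A] [Semiring S]
    [Fintype ι] (φ : S →+* A) (v : ι → A) (I : Ideal A)
    (hI : ∀ x, x ∈ I ↔ ∃ a : ι → S, x = ∑ i, v i * φ (a i)) :
    I = Ideal.span (Set.range v) := by
  classical
  refine le_antisymm (fun x hx => ?_) (Ideal.span_le.mpr ?_)
  · obtain ⟨a, rfl⟩ := (hI x).mp hx
    exact Ideal.sum_mem _ fun i _ => Ideal.mul_mem_right _ _ (Ideal.subset_span ⟨i, rfl⟩)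
  · rintro _ ⟨i, rfl⟩
    refine (hI _).mpr ⟨Pi.single i 1, ?_⟩
    simp [Pi.single_apply]

namespace Polynomial

variable {R : Type*} [Semiring R]

variable (R) in
theorem natCard_degreeLT (m : ℕ) :
    Nat.card (degreeLT R m) = Nat.card R ^ m := by
  rw [Nat.card_congr (degreeLTEquiv R m).toEquiv, Nat.card_fun, Nat.card_fin]

theorem mul_mem_degreeLT_natDegree_add (g : R[X]) {b : R[X]} {m : ℕ} (hb : b ∈ degreeLT R m) :
    g * b ∈ degreeLT R (g.natDegree + m) := by
  rw [mem_degreeLT] at hb ⊢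
  calc (g * b).degree ≤ g.natDegree + b.degree := degree_mul_le_of_le degree_le_natDegree le_rfl
    _ < g.natDegree + m := WithBot.add_lt_add_left WithBot.coe_ne_bot hb
    _ = ↑(g.natDegree + m) := by push_cast; rfl

end Polynomial

namespace AdjoinRoot

variable {R : Type*} [CommRing R]

theorem map_mk {S : Type*} [CommRing S] (f : R →+* S) (p : R[X]) (q : S[X]) (h : q ∣ p.map f)
    (g : R[X]) : map f p q h (mk p g) = mk q (g.map f) := by
  rw [map, lift_mk, ← eval₂_map, ← algebraMap_eq, ← aeval_def, aeval_eq]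

theorem mem_span_mk_singleton_iff {f g : R[X]} {x : AdjoinRoot f} :
    x ∈ Ideal.span {mk f g} ↔ ∃ a, x = mk f (g * a) := by
  rw [Ideal.mem_span_singleton']
  constructor
  · rintro ⟨c, rfl⟩
    obtain ⟨a, rfl⟩ := mk_surjective c
    exact ⟨a, by rw [map_mul, mul_comm]⟩
  · rintro ⟨a, rfl⟩
    exact ⟨mk f a, by rw [map_mul, mul_comm]⟩

theorem injOn_mk_degreeLT {f : R[X]} (hf : f.Monic) :
    Set.InjOn (mk f) (degreeLT R f.natDegree) := by
  nontriviality R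
  intro b hb b' hb' h
  rw [SetLike.mem_coe, mem_degreeLT] at hb hb'
  rw [mk_eq_mk] at h
  by_contra hne
  refine hf.not_dvd_of_degree_lt (sub_ne_zero.mpr hne) ?_ h
  rw [degree_eq_natDegree hf.ne_zero]
  exact (degree_sub_le _ _).trans_lt (max_lt hb hb')

theorem natCard_span_mk_singleton {f g : R[X]} (hf : f.Monic) (hg : g.Monic) (hgf : g ∣ f) :
    Nat.card (Ideal.span {mk f g}) = Nat.card R ^ (f.natDegree - g.natDegree) := by
  obtain ⟨h, rfl⟩ := hgf
  have hh : h.Monic := hg.of_mul_monic_left hf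
  rw [hg.natDegree_mul hh, Nat.add_sub_cancel_left, ← natCard_degreeLT R h.natDegree]
  refine (Nat.card_eq_of_bijective
    (fun b : degreeLT R h.natDegree =>
      ⟨mk _ (g * b), mem_span_mk_singleton_iff.mpr ⟨b, rfl⟩⟩)
    ⟨fun b b' hbb' => ?_, fun ⟨x, hx⟩ => ?_⟩).symm
  · have hgb : g * (b : R[X]) = g * b' := by
      refine injOn_mk_degreeLT hf ?_ ?_ (congrArg Subtype.val hbb')
      all_goals
        rw [hg.natDegree_mul hh]
        exact mul_mem_degreeLT_natDegree_add g (Subtype.prop _)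
    exact Subtype.ext (hg.isRegular.left hgb)
  · obtain ⟨a, rfl⟩ := mem_span_mk_singleton_iff.mp hx
    have hmod : a %ₘ h ∈ degreeLT R h.natDegree := by
      nontriviality R
      rw [mem_degreeLT, ← degree_eq_natDegree hh.ne_zero]
      exact degree_modByMonic_lt a hh
    refine ⟨⟨a %ₘ h, hmod⟩, Subtype.ext <| mk_eq_mk.mpr ⟨-(a /ₘ h), ?_⟩⟩
    change g * (a %ₘ h) - g * a = _
    rw [modByMonic_eq_sub_mul_div]
    ring

theorem eq_span_smul_mk_of_mem_iff {S ι : Type*} [CommRing S] [Algebra R S] [Fintype ι]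
    {F : S[X]} (c : ι → S) (g : ι → R[X]) (C : Ideal (AdjoinRoot F))
    (hC : ∀ x, x ∈ C ↔
      ∃ a : ι → R[X], x = ∑ i, c i • mk F ((g i * a i).map (algebraMap R S))) :
    C = Ideal.span (Set.range fun i => c i • mk F ((g i).map (algebraMap R S))) := by
  refine Ideal.eq_span_range_of_mem_iff_exists_sum
    ((mk F).comp (mapRingHom (algebraMap R S))) _ C fun x => ?_
  simpa only [Polynomial.map_mul, map_mul, ← smul_mul_assoc, RingHom.comp_apply, coe_mapRingHom]
    using hC x

end AdjoinRoot

noncomputable section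

namespace ProdThree

variable {R : Type*} [CommRing R]

def idem : Fin 3 → R × R × R := ![(1, 0, 0), (0, 1, 0), (0, 0, 1)]

def proj : Fin 3 → (R × R × R →+* R) :=
  ![RingHom.fst R (R × R), (RingHom.fst R R).comp (RingHom.snd R (R × R)),
    (RingHom.snd R R).comp (RingHom.snd R (R × R))]

theorem proj_idem (i j : Fin 3) : proj j (idem i : R × R × R) = if i = j then 1 else 0 := by
  fin_cases i <;> fin_cases j <;> simp [proj, idem]

theorem proj_comp_algebraMap (j : Fin 3) :
    (proj j).comp (algebraMap R (R × R × R)) = RingHom.id R := by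
  ext x; fin_cases j <;> rfl

section Glue

-- `F` is not replaced by `f.map _`, so that `F` can be `X ^ n - 1` over `R × R × R` verbatim.
variable {f : R[X]} {F : (R × R × R)[X]} (hF : f.map (algebraMap R (R × R × R)) = F)

def embed : AdjoinRoot f →+* AdjoinRoot F :=
  AdjoinRoot.map (algebraMap R (R × R × R)) f F hF.symm.dvd

def projAdjoinRoot (j : Fin 3) : AdjoinRoot F →+* AdjoinRoot f :=
  AdjoinRoot.map (proj j) F f <| by rw [← hF, map_map, proj_comp_algebraMap, map_id]

theorem embed_mk (b : R[X]) :
    embed hF (AdjoinRoot.mk f b) = AdjoinRoot.mk F (b.map (algebraMap R (R × R × R))) :=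
  AdjoinRoot.map_mk ..

theorem projAdjoinRoot_smul_embed (i j : Fin 3) (z : AdjoinRoot f) :
    projAdjoinRoot hF j ((idem i : R × R × R) • embed hF z) = if i = j then z else 0 := by
  obtain ⟨b, rfl⟩ := AdjoinRoot.mk_surjective z
  rw [Algebra.smul_def, map_mul, AdjoinRoot.algebraMap_eq, projAdjoinRoot, AdjoinRoot.map_of,
    embed_mk, AdjoinRoot.map_mk, map_map, proj_comp_algebraMap, map_id, proj_idem]
  split_ifs <;> simp

def glue (y : Fin 3 → AdjoinRoot f) : AdjoinRoot F :=
  ∑ i, (idem i : R × R × R) • embed hF (y i)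

theorem projAdjoinRoot_glue (y : Fin 3 → AdjoinRoot f) (j : Fin 3) :
    projAdjoinRoot hF j (glue hF y) = y j := by
  simp [glue, projAdjoinRoot_smul_embed]

theorem glue_injective : Function.Injective (glue hF) := fun y y' h =>
  funext fun j => by rw [← projAdjoinRoot_glue hF y, h, projAdjoinRoot_glue]

end Glue

theorem natCard_eq_prod_of_mem_iff {f : R[X]} {F : (R × R × R)[X]}
    (hF : f.map (algebraMap R (R × R × R)) = F) (g : Fin 3 → R[X]) (C : Ideal (AdjoinRoot F))
    (hC : ∀ x, x ∈ C ↔ ∃ a : Fin 3 → R[X],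
      x = ∑ i, (idem i : R × R × R) •
        AdjoinRoot.mk F ((g i * a i).map (algebraMap R (R × R × R)))) :
    Nat.card C = ∏ i, Nat.card (Ideal.span {AdjoinRoot.mk f (g i)}) := by
  have hC_eq : (C : Set (AdjoinRoot F)) = glue hF '' Set.univ.pi fun i =>
      (Ideal.span {AdjoinRoot.mk f (g i)} : Set (AdjoinRoot f)) := by
    ext x
    simp only [SetLike.mem_coe, hC, Set.mem_image, Set.mem_univ_pi,
      AdjoinRoot.mem_span_mk_singleton_iff]
    constructor
    · rintro ⟨a, rfl⟩
      refine ⟨fun i => AdjoinRoot.mk f (g i * a i), fun i => ⟨a i, rfl⟩, ?_⟩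
      simp [glue, embed_mk]
    · rintro ⟨y, hy, rfl⟩
      choose a ha using hy
      exact ⟨a, by simp [glue, ha, embed_mk]⟩
  change Nat.card (C : Set (AdjoinRoot F)) = _
  rw [hC_eq, Nat.card_image_of_injective (glue_injective hF),
    Nat.card_congr (Equiv.Set.univPi _), Nat.card_pi]
  rfl

end ProdThree

end

/-- If `C = e1 C1 ⊕ e2 C2 ⊕ e3 C3` is a cyclic code of length `n` over
`R = e1 F ⊕ e2 F ⊕ e3 F` (realized as `F × F × F`, `F = F_{p^k}`), i.e. an ideal of
`R[x]/(x^n - 1)` whose elements are exactly the `e1 a1(x) + e2 a2(x) + e3 a3(x)` with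
`a i` a multiple of the generator polynomial `g i` of `C i`, then
`C = <e1 g1(x), e2 g2(x), e3 g3(x)>` and `|C| = (p^k)^{3n - deg g1 - deg g2 - deg g3}`. -/
theorem stmt16 (p k n : ℕ) [Fact p.Prime] (hk : 0 < k) (hn : 0 < n)
    (g : Fin 3 → Polynomial (GaloisField p k))
    (hmonic : ∀ i, (g i).Monic) (hdvd : ∀ i, g i ∣ X ^ n - 1)
    (C : Ideal (AdjoinRoot
      ((X : Polynomial
        (GaloisField p k × GaloisField p k × GaloisField p k)) ^ n - 1)))
    (hC : ∀ x, x ∈ C ↔ ∃ a : Fin 3 → Polynomial (GaloisField p k),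
      x = ∑ i, ![((1 : GaloisField p k), (0 : GaloisField p k), (0 : GaloisField p k)),
                 (0, 1, 0), (0, 0, 1)] i •
        AdjoinRoot.mk _ ((g i * a i).map (algebraMap (GaloisField p k)
          (GaloisField p k × GaloisField p k × GaloisField p k)))) :
    C = Ideal.span
        (Set.range fun i : Fin 3 =>
          ![((1 : GaloisField p k), (0 : GaloisField p k), (0 : GaloisField p k)),
            (0, 1, 0), (0, 0, 1)] i •
            AdjoinRoot.mk _ ((g i).map (algebraMap (GaloisField p k)
              (GaloisField p k × GaloisField p k × GaloisField p k)))) ∧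
      Nat.card C =
        p ^ (k * (3 * n - (g 0).natDegree - (g 1).natDegree - (g 2).natDegree)) := by
  refine ⟨AdjoinRoot.eq_span_smul_mk_of_mem_iff _ g C hC, ?_⟩
  have hXn : ((X : (GaloisField p k)[X]) ^ n - 1).Monic := by
    simpa using monic_X_pow_sub_C (1 : GaloisField p k) hn.ne'
  have hXn_deg : ((X : (GaloisField p k)[X]) ^ n - 1).natDegree = n := by
    simpa using natDegree_X_pow_sub_C (n := n) (r := (1 : GaloisField p k))
  have hdeg (i : Fin 3) : (g i).natDegree ≤ n :=
    hXn_deg ▸ natDegree_le_of_dvd (hdvd i) hXn.ne_zero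
  have hF : ((X : (GaloisField p k)[X]) ^ n - 1).map
      (algebraMap (GaloisField p k) (GaloisField p k × GaloisField p k × GaloisField p k)) =
      X ^ n - 1 := by simp
  rw [ProdThree.natCard_eq_prod_of_mem_iff hF g C hC, Fin.prod_univ_three]
  simp only [AdjoinRoot.natCard_span_mk_singleton hXn (hmonic _) (hdvd _), hXn_deg,
    GaloisField.card p k hk.ne', ← pow_mul, ← pow_add, ← Nat.mul_add]
  have := hdeg 0; have := hdeg 1; have := hdeg 2
  congr 2
  omega
end

section
/- Let C = e_1 C_1 ⊕ e_2 C_2 ⊕ e_3 C_3 be a cyclic code of length n over R with gcd(n, p) = 1, where C_i = <f_i(x)> with f_i an idempotent generator of C_i in F[x]/(x^n - 1). Then e = e_1 f_1(x) + e_2 f_2(x) + e_3 f_3(x) is the unique idempotent of C with C = <e>. -/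
open Polynomial

/-- Let `C = e1 C1 ⊕ e2 C2 ⊕ e3 C3` be a cyclic code of length `n`
(`gcd(n,p) = 1`) over `R = e1 F ⊕ e2 F ⊕ e3 F` (realized as `F × F × F`), where
`C i = <f i>` with `f i` an idempotent generator of `C i` in `F[x]/(x^n - 1)`. Then
`e = e1 f1(x) + e2 f2(x) + e3 f3(x)` is the unique idempotent of
`R[x]/(x^n - 1)` with `C = <e>`. -/
theorem stmt17 (p k n : ℕ) [Fact p.Prime] (hk : 0 < k) (hn : 0 < n)
    (hcop : Nat.Coprime n p)
    (f : Fin 3 → Polynomial (GaloisField p k))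
    (hidem : ∀ i, AdjoinRoot.mk ((X : Polynomial (GaloisField p k)) ^ n - 1) (f i) *
        AdjoinRoot.mk ((X : Polynomial (GaloisField p k)) ^ n - 1) (f i) =
      AdjoinRoot.mk ((X : Polynomial (GaloisField p k)) ^ n - 1) (f i))
    (C : Ideal (AdjoinRoot
      ((X : Polynomial
        (GaloisField p k × GaloisField p k × GaloisField p k)) ^ n - 1)))
    (hC : ∀ x, x ∈ C ↔ ∃ a : Fin 3 → Polynomial (GaloisField p k),
      x = ∑ i, ![((1 : GaloisField p k), (0 : GaloisField p k), (0 : GaloisField p k)),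
                 (0, 1, 0), (0, 0, 1)] i •
        AdjoinRoot.mk _ ((f i * a i).map (algebraMap (GaloisField p k)
          (GaloisField p k × GaloisField p k × GaloisField p k)))) :
    let e := ∑ i, ![((1 : GaloisField p k), (0 : GaloisField p k), (0 : GaloisField p k)),
                 (0, 1, 0), (0, 0, 1)] i •
        AdjoinRoot.mk
          ((X : Polynomial
            (GaloisField p k × GaloisField p k × GaloisField p k)) ^ n - 1)
          ((f i).map (algebraMap (GaloisField p k)
            (GaloisField p k × GaloisField p k × GaloisField p k)))
    e ∈ C ∧ e * e = e ∧ C = Ideal.span {e} ∧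
      ∀ e', e' * e' = e' → C = Ideal.span {e'} → e' = e := by
  intro e
  set ε : Fin 3 → GaloisField p k × GaloisField p k × GaloisField p k :=
    ![((1 : GaloisField p k), (0 : GaloisField p k), (0 : GaloisField p k)),
      (0, 1, 0), (0, 0, 1)] with hε
  set φ : Polynomial (GaloisField p k) →+*
      AdjoinRoot ((X : Polynomial (GaloisField p k × GaloisField p k × GaloisField p k)) ^ n - 1) :=
    (AdjoinRoot.mk ((X : Polynomial (GaloisField p k × GaloisField p k × GaloisField p k)) ^ n - 1)).comp
      (mapRingHom (algebraMap (GaloisField p k) (GaloisField p k × GaloisField p k × GaloisField p k))) with hφ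
  have hij : ∀ i j, ε i * ε j = if i = j then ε i else 0 := by
    intro i j
    fin_cases i <;> fin_cases j <;>
      simp [hε, Prod.mk_mul_mk, Prod.ext_iff]
  have hcross : ∀ x y : Fin 3 → AdjoinRoot ((X : Polynomial (GaloisField p k × GaloisField p k × GaloisField p k)) ^ n - 1),
      (∑ i, ε i • x i) * (∑ j, ε j • y j) = ∑ i, ε i • (x i * y i) := by
    intro x y
    rw [Finset.sum_mul_sum]
    simp only [smul_mul_smul_comm, hij, ite_smul, zero_smul]
    simp
  have hfactor : ∀ q r : Polynomial (GaloisField p k),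
      AdjoinRoot.mk ((X : Polynomial (GaloisField p k)) ^ n - 1) q =
        AdjoinRoot.mk ((X : Polynomial (GaloisField p k)) ^ n - 1) r → φ q = φ r := by
    intro q r h
    rw [AdjoinRoot.mk_eq_mk] at h
    simp only [hφ, RingHom.comp_apply, coe_mapRingHom]
    rw [AdjoinRoot.mk_eq_mk]
    have := map_dvd (mapRingHom (algebraMap (GaloisField p k) (GaloisField p k × GaloisField p k × GaloisField p k))) h
    simpa using this
  have hf2 : ∀ i, φ (f i) * φ (f i) = φ (f i) := by
    intro i
    rw [← map_mul]
    exact hfactor _ _ (by rw [map_mul]; exact hidem i)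
  have he : e = ∑ i, ε i • φ (f i) := rfl
  have heC : e ∈ C := by
    rw [hC]
    refine ⟨f, ?_⟩
    have : ∀ i, φ (f i * f i) = φ (f i) := fun i => by rw [map_mul, hf2]
    calc e = ∑ i, ε i • φ (f i) := he
    _ = ∑ i, ε i • φ (f i * f i) := by simp [this]
  have hee : e * e = e := by
    rw [he, hcross]
    simp [hf2]
  have hspan : C = Ideal.span {e} := by
    apply le_antisymm
    · intro x hx
      obtain ⟨a, ha⟩ := (hC x).1 hx
      rw [Ideal.mem_span_singleton]
      refine ⟨∑ i, ε i • φ (a i), ?_⟩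
      rw [he, hcross, ha]
      exact (Finset.sum_congr rfl fun i _ => by
        show _ = ε i • φ (f i * a i)
        rw [map_mul]).symm
    · rw [Ideal.span_le, Set.singleton_subset_iff]
      exact heC
  refine ⟨heC, hee, hspan, ?_⟩
  intro e' h1 h2
  have hE : e ∈ Ideal.span {e'} := by rw [← h2]; exact heC
  have hE' : e' ∈ Ideal.span {e} := by
    rw [← hspan, hC]
    exact (hC e').1 (by rw [h2]; exact Ideal.mem_span_singleton_self e')
  obtain ⟨u, hu⟩ := Ideal.mem_span_singleton.1 hE
  obtain ⟨v, hv⟩ := Ideal.mem_span_singleton.1 hE'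
  have h3 : e * e' = e := by
    rw [hu, mul_comm e', mul_assoc, h1]
  have h4 : e' * e = e' := by
    rw [hv, mul_comm e, mul_assoc, hee]
  rw [← h4, mul_comm, h3]
end

section
/- Let C be a cyclic code of length n over a field F with gcd(n, char F) = 1, with generating idempotent e(x). Then the dual code C^⊥ has generating idempotent 1 - e(x^{-1}), where e(x^{-1}) denotes the image of e under x ↦ x^{n-1} in F[x]/(x^n - 1). Moreover, if C has generator polynomial g(x) with g(x)h(x) = x^n - 1, then C^⊥ has generator polynomial the reciprocal polynomial h*(x) = x^{deg h} h(1/x). -/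
/-!
Let `σ` be the involution `x ↦ x⁻¹ = x ^ (n - 1)` of `R = F[x]/(x ^ n - 1)`. In the monomial
basis, the standard inner product of `y` and `c` is the constant coefficient of `y * σ c`.
This pairing is nondegenerate and `C` is an ideal, so `y ∈ C^⊥` iff `y * σ c = 0` for all
`c ∈ C`, i.e. `C^⊥ = σ (Ann C)`. For an idempotent generator `e`, `Ann (e) = (1 - e)`; for the
generator polynomial, `Ann (g) = (h)` since `g * h = x ^ n - 1`, and `σ h = h(x⁻¹)` is the
reciprocal polynomial `h*` times a power of the unit `x⁻¹`.
-/

open Polynomial AdjoinRoot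

theorem Nat.add_sub_mod_eq_zero_iff {j k n : ℕ} (hj : j < n) (hk : k < n) :
    (j + (n - k)) % n = 0 ↔ j = k := by
  rcases le_or_gt k j with hkj | hjk
  · rw [show j + (n - k) = j - k + n by omega, Nat.add_mod_right, Nat.mod_eq_of_lt (by omega)]
    omega
  · rw [Nat.mod_eq_of_lt (by omega)]
    omega

namespace CyclicCode

section

variable {R : Type*} [CommRing R] {n : ℕ}

local notation "𝓡" => AdjoinRoot ((X : R[X]) ^ n - 1)
local notation "𝔵" => AdjoinRoot.root ((X : R[X]) ^ n - 1)

theorem root_pow_self : (𝔵 : 𝓡) ^ n = 1 := by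
  rw [← sub_eq_zero, ← mk_X, ← map_pow, ← map_one (mk ((X : R[X]) ^ n - 1)), ← map_sub, mk_self]

theorem root_pow_sub_one_mul_root (hn : 0 < n) : (𝔵 : 𝓡) ^ (n - 1) * 𝔵 = 1 := by
  rw [pow_sub_one_mul hn.ne', root_pow_self]

variable (R n) in
noncomputable def rootInvHom : 𝓡 →ₐ[R] 𝓡 :=
  liftAlgHom _ (Algebra.ofId R _) (𝔵 ^ (n - 1)) <| by
    rw [eval₂_sub, eval₂_X_pow, eval₂_one, ← pow_mul, mul_comm, pow_mul, root_pow_self, one_pow,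
      sub_self]

theorem rootInvHom_root_pow (hn : 0 < n) {i : ℕ} (hi : i ≤ n) :
    rootInvHom R n (𝔵 ^ i) = 𝔵 ^ (n - i) := by
  rw [map_pow, rootInvHom, liftAlgHom_root]
  refine left_inv_eq_right_inv (a := 𝔵 ^ i) ?_ ?_
  · rw [← mul_pow, root_pow_sub_one_mul_root hn, one_pow]
  · rw [← pow_add, Nat.add_sub_cancel' hi, root_pow_self]

theorem rootInvHom_comp_self (hn : 0 < n) :
    (rootInvHom R n).comp (rootInvHom R n) = AlgHom.id R 𝓡 := by
  refine algHom_ext ?_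
  rw [AlgHom.comp_apply, ← pow_one 𝔵, rootInvHom_root_pow hn hn,
    rootInvHom_root_pow hn (Nat.sub_le n 1), Nat.sub_sub_self hn, AlgHom.id_apply]

variable (R) in
noncomputable def rootInv (hn : 0 < n) : 𝓡 ≃ₐ[R] 𝓡 :=
  AlgEquiv.ofAlgHom (rootInvHom R n) (rootInvHom R n) (rootInvHom_comp_self hn)
    (rootInvHom_comp_self hn)

theorem rootInv_apply (hn : 0 < n) (z : 𝓡) : rootInv R hn z = rootInvHom R n z :=
  rfl

theorem rootInv_mk (hn : 0 < n) (p : R[X]) : rootInv R hn (mk _ p) = aeval (𝔵 ^ (n - 1)) p :=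
  rfl

theorem rootInv_rootInv (hn : 0 < n) (z : 𝓡) : rootInv R hn (rootInv R hn z) = z :=
  AlgHom.congr_fun (rootInvHom_comp_self hn) z

theorem mem_map_rootInv_iff (hn : 0 < n) {I : Ideal 𝓡} {y : 𝓡} :
    y ∈ I.map (rootInv R hn) ↔ rootInv R hn y ∈ I := by
  rw [Ideal.mem_map_of_equiv]
  exact ⟨fun ⟨x, hx, hxy⟩ ↦ hxy ▸ (rootInv_rootInv hn x).symm ▸ hx,
    fun hy ↦ ⟨_, hy, rootInv_rootInv hn y⟩⟩

theorem rootInv_mk_eq_mk_reverse_mul (hn : 0 < n) (p : R[X]) :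
    rootInv R hn (mk _ p) = mk _ p.reverse * (𝔵 ^ (n - 1)) ^ p.natDegree := by
  let _ : Invertible ((𝔵 : 𝓡) ^ (n - 1)) :=
    ⟨𝔵, by rw [mul_comm, root_pow_sub_one_mul_root hn], root_pow_sub_one_mul_root hn⟩
  rw [rootInv_mk, aeval_def, ← eval₂_reverse_mul_pow, ← aeval_def]
  exact congrArg (· * _) (aeval_eq p.reverse)

theorem span_rootInv_mk (hn : 0 < n) (p : R[X]) :
    Ideal.span {rootInv R hn (mk _ p)} = Ideal.span {mk ((X : R[X]) ^ n - 1) p.reverse} := by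
  rw [rootInv_mk_eq_mk_reverse_mul, Ideal.span_singleton_mul_right_unit]
  exact (IsUnit.of_mul_eq_one _ (root_pow_sub_one_mul_root hn)).pow _

section Basis

variable (hn : 0 < n) {B : Module.Basis (Fin n) R (AdjoinRoot ((X : R[X]) ^ n - 1))}
  (hB : ∀ i : Fin n, B i = AdjoinRoot.root ((X : R[X]) ^ n - 1) ^ (i : ℕ))
include hB

theorem repr_root_pow (m : ℕ) :
    B.repr (𝔵 ^ m) = Finsupp.single ⟨m % n, Nat.mod_lt m hn⟩ 1 := by
  rw [pow_eq_pow_mod m root_pow_self, ← hB ⟨m % n, _⟩, B.repr_self]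

theorem repr_mul_root_pow_sub (z : 𝓡) (k : Fin n) :
    B.repr (z * 𝔵 ^ (n - k)) ⟨0, hn⟩ = B.repr z k := by
  have key : Finsupp.lapply ⟨0, hn⟩ ∘ₗ B.repr.toLinearMap ∘ₗ LinearMap.mulRight R (𝔵 ^ (n - k)) =
      Finsupp.lapply k ∘ₗ B.repr.toLinearMap := by
    refine B.ext fun j ↦ ?_
    simp only [LinearMap.comp_apply, LinearMap.mulRight_apply, LinearEquiv.coe_coe,
      Finsupp.lapply_apply, B.repr_self]
    rw [hB, ← pow_add, repr_root_pow hn hB, Finsupp.single_apply, Finsupp.single_apply]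
    exact if_congr
      (Fin.ext_iff.trans ((Nat.add_sub_mod_eq_zero_iff j.isLt k.isLt).trans Fin.ext_iff.symm))
      rfl rfl
  exact LinearMap.congr_fun key z

theorem repr_mul_rootInv (y c : 𝓡) :
    B.repr (y * rootInv R hn c) ⟨0, hn⟩ = ∑ i, B.repr y i * B.repr c i := by
  have hinv (i : Fin n) : rootInv R hn (B i) = 𝔵 ^ (n - i) := by
    rw [hB, rootInv_apply, rootInvHom_root_pow hn i.isLt.le]
  conv_lhs => rw [← B.sum_repr c]
  simp only [map_sum, map_smul, hinv, Finset.mul_sum, mul_smul_comm, Finsupp.coe_finsetSum,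
    Finset.sum_apply, Finsupp.smul_apply, repr_mul_root_pow_sub hn hB, smul_eq_mul, mul_comm]

theorem eq_zero_of_forall_repr_mul_rootInv {w : 𝓡}
    (h : ∀ r, B.repr (w * rootInv R hn r) ⟨0, hn⟩ = 0) : w = 0 := by
  refine B.repr.map_eq_zero_iff.mp (Finsupp.ext fun k ↦ ?_)
  simpa [repr_mul_rootInv hn hB, B.repr_self, Finsupp.single_apply] using h (B k)

theorem dual_eq_map_annihilator {C C' : Ideal 𝓡}
    (hC' : ∀ y, y ∈ C' ↔ ∀ c ∈ C, ∑ i, B.repr y i * B.repr c i = 0) :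
    C' = C.annihilator.map (rootInv R hn) := by
  ext y
  simp_rw [hC', mem_map_rootInv_iff, Submodule.mem_annihilator, smul_eq_mul,
    ← repr_mul_rootInv hn hB]
  constructor
  · intro h c hc
    refine (rootInv R hn).injective ?_
    rw [map_mul, rootInv_rootInv, map_zero]
    refine eq_zero_of_forall_repr_mul_rootInv hn hB fun r ↦ ?_
    rw [mul_assoc, ← map_mul]
    exact h _ (C.mul_mem_right r hc)
  · intro h c hc
    rw [← rootInv_rootInv hn y, ← map_mul, h c hc, map_zero, map_zero, Finsupp.zero_apply]

end Basis

end

theorem ker_toSpanSingleton_mk_eq_span {R : Type*} [CommRing R] [IsDomain R] {f g h : R[X]}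
    (hgh : g * h = f) (hf : f ≠ 0) :
    LinearMap.ker (LinearMap.toSpanSingleton (AdjoinRoot f) (AdjoinRoot f) (mk f g)) =
      Ideal.span {mk f h} := by
  ext z
  obtain ⟨p, rfl⟩ := mk_surjective z
  rw [LinearMap.mem_ker, LinearMap.toSpanSingleton_apply, smul_eq_mul, Ideal.mem_span_singleton]
  constructor
  · intro hpg
    rw [← map_mul, mk_eq_zero, ← hgh, mul_comm p,
      mul_dvd_mul_iff_left (left_ne_zero_of_mul (hgh ▸ hf))] at hpg
    exact map_dvd (mk f) hpg
  · rintro ⟨t, ht⟩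
    rw [ht, mul_right_comm, ← map_mul, mul_comm h, hgh, mk_self, zero_mul]

end CyclicCode

theorem stmt18_general {F : Type*} [Field F] (n : ℕ) (hn : 0 < n)
    (B : Module.Basis (Fin n) F (AdjoinRoot ((X : F[X]) ^ n - 1)))
    (hB : ∀ i : Fin n, B i = AdjoinRoot.root ((X : F[X]) ^ n - 1) ^ (i : ℕ))
    (C C' : Ideal (AdjoinRoot ((X : F[X]) ^ n - 1)))
    (epoly : F[X])
    (he : AdjoinRoot.mk ((X : F[X]) ^ n - 1) epoly *
        AdjoinRoot.mk ((X : F[X]) ^ n - 1) epoly =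
      AdjoinRoot.mk ((X : F[X]) ^ n - 1) epoly)
    (hCe : C = Ideal.span {AdjoinRoot.mk ((X : F[X]) ^ n - 1) epoly})
    (g h : F[X]) (hgh : g * h = X ^ n - 1)
    (hCg : C = Ideal.span {AdjoinRoot.mk ((X : F[X]) ^ n - 1) g})
    (hC' : ∀ y, y ∈ C' ↔ ∀ c ∈ C, ∑ i, B.repr y i * B.repr c i = 0) :
    C' = Ideal.span
        {1 - Polynomial.aeval (AdjoinRoot.root ((X : F[X]) ^ n - 1) ^ (n - 1)) epoly} ∧
      C' = Ideal.span {AdjoinRoot.mk ((X : F[X]) ^ n - 1) h.reverse} := by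
  have hdual := CyclicCode.dual_eq_map_annihilator hn hB hC'
  have hX : (X : F[X]) ^ n - 1 ≠ 0 := by simpa using X_pow_sub_C_ne_zero hn (1 : F)
  constructor
  · rw [hdual, hCe, Submodule.annihilator_span_singleton,
      IsIdempotentElem.ker_toSpanSingleton_eq_span he, Ideal.map_span, Set.image_singleton,
      map_sub, map_one, CyclicCode.rootInv_mk]
  · rw [hdual, hCg, Submodule.annihilator_span_singleton,
      CyclicCode.ker_toSpanSingleton_mk_eq_span hgh hX, Ideal.map_span, Set.image_singleton,
      CyclicCode.span_rootInv_mk]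

/-- Let `C` be a cyclic code of length `n` over a field `F` with
`gcd(n, char F) = 1`, with generating idempotent `e(x)` (the image of `epoly`) and
generator polynomial `g`, `g * h = x^n - 1`. Identify `F[x]/(x^n-1)` with `F^n` via
the monomial basis `B` (`B i = x^i`), and let `C'` be the dual code of `C` under the
standard inner product. Then `C'` has generating idempotent `1 - e(x^{-1})`
(with `x^{-1} = x^{n-1}`) and generator polynomial the reciprocal polynomial `h*`. -/
theorem stmt18 {F : Type*} [Field F] (n : ℕ) (hn : 0 < n)
    (hchar : Nat.Coprime n (ringChar F))
    (B : Module.Basis (Fin n) F (AdjoinRoot ((X : F[X]) ^ n - 1)))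
    (hB : ∀ i : Fin n, B i = AdjoinRoot.root ((X : F[X]) ^ n - 1) ^ (i : ℕ))
    (C C' : Ideal (AdjoinRoot ((X : F[X]) ^ n - 1)))
    (epoly : F[X])
    (he : AdjoinRoot.mk ((X : F[X]) ^ n - 1) epoly *
        AdjoinRoot.mk ((X : F[X]) ^ n - 1) epoly =
      AdjoinRoot.mk ((X : F[X]) ^ n - 1) epoly)
    (hCe : C = Ideal.span {AdjoinRoot.mk ((X : F[X]) ^ n - 1) epoly})
    (g h : F[X]) (hg : g.Monic) (hgh : g * h = X ^ n - 1)
    (hCg : C = Ideal.span {AdjoinRoot.mk ((X : F[X]) ^ n - 1) g})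
    (hC' : ∀ y, y ∈ C' ↔ ∀ c ∈ C, ∑ i, B.repr y i * B.repr c i = 0) :
    C' = Ideal.span
        {1 - Polynomial.aeval (AdjoinRoot.root ((X : F[X]) ^ n - 1) ^ (n - 1)) epoly} ∧
      C' = Ideal.span {AdjoinRoot.mk ((X : F[X]) ^ n - 1) h.reverse} :=
  stmt18_general n hn B hB C C' epoly he hCe g h hgh hCg hC'
end

section
/- Let C = e_1 C_1 ⊕ e_2 C_2 ⊕ e_3 C_3 be a linear code of length n over R = e_1 F ⊕ e_2 F ⊕ e_3 F. Then the dual code satisfies C^⊥ = e_1 C_1^⊥ ⊕ e_2 C_2^⊥ ⊕ e_3 C_3^⊥. Consequently, C is self-dual over R if and only if C_1, C_2, C_3 are self-dual over F. -/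
/-- For a linear code `C = e1 C1 ⊕ e2 C2 ⊕ e3 C3` of length `n` over
`R = e1 F ⊕ e2 F ⊕ e3 F` (realized as `F × F × F`), the dual code satisfies
`C^⊥ = e1 C1^⊥ ⊕ e2 C2^⊥ ⊕ e3 C3^⊥`; consequently `C` is self-dual over `R` iff
`C1, C2, C3` are self-dual over `F`. -/
theorem stmt19 (p k n : ℕ) [Fact p.Prime] (hk : 0 < k)
    (C : Submodule (GaloisField p k × GaloisField p k × GaloisField p k)
      (Fin n → GaloisField p k × GaloisField p k × GaloisField p k)) :
    let F := GaloisField p k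
    let C1 : Set (Fin n → F) := {s | ∃ t u : Fin n → F, (fun i => (s i, t i, u i)) ∈ C}
    let C2 : Set (Fin n → F) := {t | ∃ s u : Fin n → F, (fun i => (s i, t i, u i)) ∈ C}
    let C3 : Set (Fin n → F) := {u | ∃ s t : Fin n → F, (fun i => (s i, t i, u i)) ∈ C}
    let Cd : Set (Fin n → F × F × F) := {x | ∀ c ∈ C, ∑ i, x i * c i = 0}
    let C1d : Set (Fin n → F) := {x | ∀ c ∈ C1, ∑ i, x i * c i = 0}
    let C2d : Set (Fin n → F) := {x | ∀ c ∈ C2, ∑ i, x i * c i = 0}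
    let C3d : Set (Fin n → F) := {x | ∀ c ∈ C3, ∑ i, x i * c i = 0}
    (∀ x, x ∈ Cd ↔
        ∃ s ∈ C1d, ∃ t ∈ C2d, ∃ u ∈ C3d, x = fun i => (s i, t i, u i)) ∧
      ((C : Set (Fin n → F × F × F)) = Cd ↔ (C1 = C1d ∧ C2 = C2d ∧ C3 = C3d)) := by
  intro F C1 C2 C3 Cd C1d C2d C3d
  -- e1, e2, e3 multiplication lemmas
  have hs1 : ∀ s, s ∈ C1 → (fun i => ((s i : F), (0:F), (0:F))) ∈ C := by
    rintro s ⟨t, u, h⟩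
    have h2 := C.smul_mem (((1:F),(0:F),(0:F)) : F × F × F) h
    have he : (((1:F),(0:F),(0:F)) : F × F × F) • (fun i => ((s i), (t i), (u i)))
        = fun i => ((s i : F), (0:F), (0:F)) := by
      funext i
      show (((1:F),(0:F),(0:F)) : F × F × F) * _ = _
      simp [Prod.ext_iff]
    rwa [he] at h2
  have hs2 : ∀ t, t ∈ C2 → (fun i => ((0:F), (t i : F), (0:F))) ∈ C := by
    rintro t ⟨s, u, h⟩
    have h2 := C.smul_mem (((0:F),(1:F),(0:F)) : F × F × F) h
    have he : (((0:F),(1:F),(0:F)) : F × F × F) • (fun i => ((s i), (t i), (u i)))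
        = fun i => ((0:F), (t i : F), (0:F)) := by
      funext i
      show (((0:F),(1:F),(0:F)) : F × F × F) * _ = _
      simp [Prod.ext_iff]
    rwa [he] at h2
  have hs3 : ∀ u, u ∈ C3 → (fun i => ((0:F), (0:F), (u i : F))) ∈ C := by
    rintro u ⟨s, t, h⟩
    have h2 := C.smul_mem (((0:F),(0:F),(1:F)) : F × F × F) h
    have he : (((0:F),(0:F),(1:F)) : F × F × F) • (fun i => ((s i), (t i), (u i)))
        = fun i => ((0:F), (0:F), (u i : F)) := by
      funext i
      show (((0:F),(0:F),(1:F)) : F × F × F) * _ = _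
      simp [Prod.ext_iff]
    rwa [he] at h2
  -- projections of members of C
  have hc1 : ∀ c, c ∈ C → (fun i => (c i).1) ∈ C1 :=
    fun c hc => ⟨fun i => (c i).2.1, fun i => (c i).2.2, hc⟩
  have hc2 : ∀ c, c ∈ C → (fun i => (c i).2.1) ∈ C2 :=
    fun c hc => ⟨fun i => (c i).1, fun i => (c i).2.2, hc⟩
  have hc3 : ∀ c, c ∈ C → (fun i => (c i).2.2) ∈ C3 :=
    fun c hc => ⟨fun i => (c i).1, fun i => (c i).2.1, hc⟩
  have hpart1 : ∀ x, x ∈ Cd ↔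
      ∃ s ∈ C1d, ∃ t ∈ C2d, ∃ u ∈ C3d, x = fun i => (s i, t i, u i) := by
    intro x
    constructor
    · intro hx
      refine ⟨fun i => (x i).1, ?_, fun i => (x i).2.1, ?_, fun i => (x i).2.2, ?_, rfl⟩
      · intro c hc
        have h := congrArg Prod.fst (hx _ (hs1 c hc))
        simpa [Prod.fst_sum] using h
      · intro c hc
        have h := congrArg (fun z : F × F × F => z.2.1) (hx _ (hs2 c hc))
        simpa [Prod.fst_sum, Prod.snd_sum] using h
      · intro c hc
        have h := congrArg (fun z : F × F × F => z.2.2) (hx _ (hs3 c hc))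
        simpa [Prod.snd_sum] using h
    · rintro ⟨s, hs, t, ht, u, hu, rfl⟩
      intro c hc
      have h1 := hs _ (hc1 c hc)
      have h2 := ht _ (hc2 c hc)
      have h3 := hu _ (hc3 c hc)
      refine Prod.ext ?_ (Prod.ext ?_ ?_)
      · simpa [Prod.fst_sum] using h1
      · simpa [Prod.fst_sum, Prod.snd_sum] using h2
      · simpa [Prod.snd_sum] using h3
  refine ⟨hpart1, ?_⟩
  constructor
  · intro hCd
    refine ⟨?_, ?_, ?_⟩
    · ext s
      constructor
      · intro hsC1 c hcC1
        have hmem : (fun i => ((s i : F), (0:F), (0:F))) ∈ Cd := hCd ▸ hs1 s hsC1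
        have h := congrArg Prod.fst (hmem _ (hs1 c hcC1))
        simpa [Prod.fst_sum] using h
      · intro hsd
        refine ⟨0, 0, ?_⟩
        have : (fun i => ((s i : F), (0:F), (0:F))) ∈ Cd := by
          intro c hc
          have h1 := hsd _ (hc1 c hc)
          refine Prod.ext ?_ (Prod.ext ?_ ?_) <;>
            simp [Prod.fst_sum, Prod.snd_sum, h1]
        rw [← SetLike.mem_coe, hCd]
        exact this
    · ext t
      constructor
      · intro htC2 c hcC2
        have hmem : (fun i => ((0:F), (t i : F), (0:F))) ∈ Cd := hCd ▸ hs2 t htC2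
        have h := congrArg (fun z : F × F × F => z.2.1) (hmem _ (hs2 c hcC2))
        simpa [Prod.fst_sum, Prod.snd_sum] using h
      · intro htd
        refine ⟨0, 0, ?_⟩
        have : (fun i => ((0:F), (t i : F), (0:F))) ∈ Cd := by
          intro c hc
          have h2 := htd _ (hc2 c hc)
          refine Prod.ext ?_ (Prod.ext ?_ ?_) <;>
            simp [Prod.fst_sum, Prod.snd_sum, h2]
        rw [← SetLike.mem_coe, hCd]
        exact this
    · ext u
      constructor
      · intro huC3 c hcC3
        have hmem : (fun i => ((0:F), (0:F), (u i : F))) ∈ Cd := hCd ▸ hs3 u huC3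
        have h := congrArg (fun z : F × F × F => z.2.2) (hmem _ (hs3 c hcC3))
        simpa [Prod.snd_sum] using h
      · intro hud
        refine ⟨0, 0, ?_⟩
        have : (fun i => ((0:F), (0:F), (u i : F))) ∈ Cd := by
          intro c hc
          have h3 := hud _ (hc3 c hc)
          refine Prod.ext ?_ (Prod.ext ?_ ?_) <;>
            simp [Prod.fst_sum, Prod.snd_sum, h3]
        rw [← SetLike.mem_coe, hCd]
        exact this
  · rintro ⟨h1, h2, h3⟩
    ext v
    constructor
    · intro hv c hc
      have g1 := (h1 ▸ hc1 v hv : (fun i => (v i).1) ∈ C1d) _ (hc1 c hc)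
      have g2 := (h2 ▸ hc2 v hv : (fun i => (v i).2.1) ∈ C2d) _ (hc2 c hc)
      have g3 := (h3 ▸ hc3 v hv : (fun i => (v i).2.2) ∈ C3d) _ (hc3 c hc)
      refine Prod.ext ?_ (Prod.ext ?_ ?_)
      · simpa [Prod.fst_sum] using g1
      · simpa [Prod.fst_sum, Prod.snd_sum] using g2
      · simpa [Prod.snd_sum] using g3
    · intro hx
      obtain ⟨s, hs, t, ht, u, hu, rfl⟩ := (hpart1 v).1 hx
      have m1 := hs1 s (h1 ▸ hs)
      have m2 := hs2 t (h2 ▸ ht)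
      have m3 := hs3 u (h3 ▸ hu)
      have := C.add_mem (C.add_mem m1 m2) m3
      have he : ((fun i => ((s i : F), (0:F), (0:F))) + (fun i => ((0:F), (t i : F), (0:F)))
          + fun i => ((0:F), (0:F), (u i : F))) = fun i => (s i, t i, u i) := by
        funext i
        simp [Prod.ext_iff]
      rwa [he] at this
end
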